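/- arXiv:2501.06000 — 3 statements merged into one kernel-verified Lean document; each statement's English description precedes it below -/
import Mathlib

section
/- Let {P_ij}_{1≤i,j≤N} be a partially cycle-consistent family of partial matchings between N views of sizes n_1,…,n_N. Then for all i, j, k, P_ij P_jk P_ki = I_ijki, where I_ijki ∈ {0,1}^{n_i×n_i} is the diagonal matrix defined by I_ijki[a,d] = 1 if a = d and there exist b, c with P_ij[a,b] = P_jk[b,c] = P_ki[c,d] = 1, and I_ijki[a,d] = 0 otherwise. In particular the triple product has all off-diagonal entries equal to 0 and every diagonal entry equal to 0 or 1. -/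
open Matrix

/-- A 0/1 matrix (over ℕ) is a partial permutation matrix if every entry is 0 or 1,
every row contains at most one entry equal to 1, and every column contains at most
one entry equal to 1. -/
def IsPartialPerm {n m : ℕ} (P : Matrix (Fin n) (Fin m) ℕ) : Prop :=
  (∀ a b, P a b = 0 ∨ P a b = 1) ∧
  (∀ a b b', P a b = 1 → P a b' = 1 → b = b') ∧
  (∀ a a' b, P a b = 1 → P a' b = 1 → a = a')

/-- A family of matchings `P i j ∈ {0,1}^{n i × n j}` between `N` views is partially
cycle-consistent if each `P i j` is a partial permutation matrix, `P i i` is the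
identity, `P j i = (P i j)ᵀ`, and matching from `i` to `j` and then from `j` to `k`
implies the direct match from `i` to `k`. -/
structure IsPartiallyCycleConsistent {N : ℕ} (n : Fin N → ℕ)
    (P : ∀ i j : Fin N, Matrix (Fin (n i)) (Fin (n j)) ℕ) : Prop where
  partialPerm : ∀ i j, IsPartialPerm (P i j)
  refl : ∀ i, P i i = 1
  symm : ∀ i j, P j i = (P i j)ᵀ
  trans : ∀ i j k, ∀ (a : Fin (n i)) (c : Fin (n k)),
    (∃ b, P i j a b = 1 ∧ P j k b c = 1) → P i k a c = 1

/-!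
Over `ℕ`, an entry of `P * Q` is a sum of products of `0`/`1` entries, and when every row of `P`
has at most one `1` at most one summand survives; so a product of partial permutation matrices is
again one, with `(P * Q) a c = 1` exactly when `a` is matched to `c` through some `b`. For the triple
product, a path `a → b → c → d` along `i → j → k → i` gives `P i k a c = 1` by transitivity and
`P i k d c = P k i c d = 1` by symmetry, so `a = d` because column `c` of `P i k` has at most one `1`.
-/

namespace IsPartialPerm

variable {l m n : ℕ} {P : Matrix (Fin l) (Fin m) ℕ} {Q : Matrix (Fin m) (Fin n) ℕ}

theorem mul_apply (hP : IsPartialPerm P) (hQ : IsPartialPerm Q) (a : Fin l) (c : Fin n) :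
    (P * Q) a c = if ∃ b, P a b = 1 ∧ Q b c = 1 then 1 else 0 := by
  rw [Matrix.mul_apply]
  split_ifs with h
  · obtain ⟨b₀, hab₀, hb₀c⟩ := h
    rw [Finset.sum_eq_single_of_mem b₀ (Finset.mem_univ _), hab₀, hb₀c]
    intro b _ hb
    have hab : P a b ≠ 1 := fun hab => hb (hP.2.1 a b b₀ hab hab₀)
    rw [(hP.1 a b).resolve_right hab, zero_mul]
  · refine Finset.sum_eq_zero fun b _ => ?_
    rcases hP.1 a b with hab | hab
    · rw [hab, zero_mul]
    · rcases hQ.1 b c with hbc | hbc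
      · rw [hbc, mul_zero]
      · exact absurd ⟨b, hab, hbc⟩ h

theorem mul_apply_eq_one (hP : IsPartialPerm P) (hQ : IsPartialPerm Q) (a : Fin l) (c : Fin n) :
    (P * Q) a c = 1 ↔ ∃ b, P a b = 1 ∧ Q b c = 1 := by
  rw [mul_apply hP hQ]
  split_ifs with h <;> simp [h]

theorem mul (hP : IsPartialPerm P) (hQ : IsPartialPerm Q) : IsPartialPerm (P * Q) := by
  refine ⟨fun a c => ?_, fun a c c' hc hc' => ?_, fun a a' c ha ha' => ?_⟩
  · rw [mul_apply hP hQ]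
    split_ifs <;> simp
  · obtain ⟨b, hab, hbc⟩ := (mul_apply_eq_one hP hQ a c).1 hc
    obtain ⟨b', hab', hbc'⟩ := (mul_apply_eq_one hP hQ a c').1 hc'
    obtain rfl := hP.2.1 a b b' hab hab'
    exact hQ.2.1 b c c' hbc hbc'
  · obtain ⟨b, hab, hbc⟩ := (mul_apply_eq_one hP hQ a c).1 ha
    obtain ⟨b', hab', hbc'⟩ := (mul_apply_eq_one hP hQ a' c).1 ha'
    obtain rfl := hQ.2.2 b b' c hbc hbc'
    exact hP.2.2 a a' b hab hab'

/-- The `Decidable` argument is implicit so that it unifies with the (possibly classical) instance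
of the target matrix instead of being synthesized. -/
theorem eq_of_apply_eq_one_iff (hP : IsPartialPerm P) (R : Fin l → Fin m → Prop)
    {_ : ∀ a b, Decidable (R a b)} (hR : ∀ a b, P a b = 1 ↔ R a b) :
    P = Matrix.of fun a b => if R a b then 1 else 0 := by
  ext a b
  rw [Matrix.of_apply]
  by_cases hab : R a b
  · rw [if_pos hab]
    exact (hR a b).2 hab
  · rw [if_neg hab]
    exact (hP.1 a b).resolve_right (mt (hR a b).1 hab)

end IsPartialPerm

namespace IsPartiallyCycleConsistent

variable {N : ℕ} {n : Fin N → ℕ} {P : ∀ i j : Fin N, Matrix (Fin (n i)) (Fin (n j)) ℕ}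

theorem eq_of_cycle (hP : IsPartiallyCycleConsistent n P) {i j k : Fin N}
    {a d : Fin (n i)} {b : Fin (n j)} {c : Fin (n k)}
    (hab : P i j a b = 1) (hbc : P j k b c = 1) (hcd : P k i c d = 1) : a = d := by
  have hac : P i k a c = 1 := hP.trans i j k a c ⟨b, hab, hbc⟩
  have hdc : P i k d c = 1 := by
    rwa [hP.symm i k, Matrix.transpose_apply] at hcd
  exact (hP.partialPerm i k).2.2 a d c hac hdc

end IsPartiallyCycleConsistent

open Classical in
/-- For a partially cycle-consistent family, `P_ij P_jk P_ki = I_ijki`, where `I_ijki`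
is the diagonal matrix with `I_ijki[a,d] = 1` iff `a = d` and there exist `b, c` with
`P_ij[a,b] = P_jk[b,c] = P_ki[c,d] = 1`.  In particular the triple product has all
off-diagonal entries equal to 0 and every diagonal entry equal to 0 or 1. -/
theorem triple_cycle_eq_mask {N : ℕ} (n : Fin N → ℕ)
    (P : ∀ i j : Fin N, Matrix (Fin (n i)) (Fin (n j)) ℕ)
    (hP : IsPartiallyCycleConsistent n P) :
    ∀ i j k : Fin N,
      (P i j * P j k * P k i =
        Matrix.of fun a d : Fin (n i) =>
          if a = d ∧ ∃ b c, P i j a b = 1 ∧ P j k b c = 1 ∧ P k i c d = 1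
          then (1 : ℕ) else 0) ∧
      (∀ a d : Fin (n i), a ≠ d → (P i j * P j k * P k i) a d = 0) ∧
      (∀ a : Fin (n i),
        (P i j * P j k * P k i) a a = 0 ∨ (P i j * P j k * P k i) a a = 1) := by
  intro i j k
  have hij := hP.partialPerm i j
  have hjk := hP.partialPerm j k
  have hki := hP.partialPerm k i
  have hcycle := (hij.mul hjk).mul hki
  have hmask : P i j * P j k * P k i = Matrix.of fun a d =>
      if a = d ∧ ∃ b c, P i j a b = 1 ∧ P j k b c = 1 ∧ P k i c d = 1 then 1 else 0 :=
    hcycle.eq_of_apply_eq_one_iff _ fun a d => by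
      simp only [IsPartialPerm.mul_apply_eq_one (hij.mul hjk) hki,
        IsPartialPerm.mul_apply_eq_one hij hjk]
      constructor
      · rintro ⟨c, ⟨b, hab, hbc⟩, hcd⟩
        exact ⟨hP.eq_of_cycle hab hbc hcd, b, c, hab, hbc, hcd⟩
      · rintro ⟨-, b, c, hab, hbc, hcd⟩
        exact ⟨c, ⟨b, hab, hbc⟩, hcd⟩
  refine ⟨hmask, fun a d had => ?_, fun a => hcycle.1 a a⟩
  rw [hmask, Matrix.of_apply, if_neg fun h => had h.1]
end

section
/- Let {P_ij}_{1≤i,j≤N} be a partially cycle-consistent family of partial matchings between N views of sizes n_1,…,n_N. Then for all i, j, k and all indices a, c: (P_ij P_jk)[a,c] = 1 if and only if P_ik[a,c] = 1 and there exists b with P_ij[a,b] = 1. Equivalently, P_ij P_jk = I_iji P_ik, where I_iji is the diagonal matrix with I_iji[a,a] = 1 exactly when row a of P_ij contains a 1. In other words, matching from view i through view j to view k agrees with the direct matching from view i to view k exactly on those objects of view i that are visible in view j. -/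
open Matrix

/-! Since `P_ij` has at most one `1` per row, `(P_ij P_jk)[a,c]` is the indicator of a path
`a → b → c`. Such a path forces `P_ik[a,c] = 1` by `trans`; conversely, if `P_ik[a,c] = 1` and
`P_ij[a,b] = 1`, then `trans` applied to `b → a → c` (using `symm`) gives `P_jk[b,c] = 1`. -/

theorem IsPartialPerm.mul_apply_eq_ite {n m l : ℕ} {P : Matrix (Fin n) (Fin m) ℕ}
    {Q : Matrix (Fin m) (Fin l) ℕ} (hP : IsPartialPerm P) (hQ : ∀ b c, Q b c = 0 ∨ Q b c = 1)
    (a : Fin n) (c : Fin l) :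
    (P * Q) a c = if ∃ b, P a b = 1 ∧ Q b c = 1 then 1 else 0 := by
  rw [Matrix.mul_apply]
  split_ifs with h
  · obtain ⟨b, hPab, hQbc⟩ := h
    rw [Finset.sum_eq_single_of_mem b (Finset.mem_univ b), hPab, hQbc]
    intro b' _ hb'
    rcases hP.1 a b' with hPab' | hPab'
    · rw [hPab', zero_mul]
    · exact absurd (hP.2.1 a b' b hPab' hPab) hb'
  · refine Finset.sum_eq_zero fun b _ => ?_
    rcases hP.1 a b with hPab | hPab
    · rw [hPab, zero_mul]
    rcases hQ b c with hQbc | hQbc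
    · rw [hQbc, mul_zero]
    · exact absurd ⟨b, hPab, hQbc⟩ h

theorem Matrix.of_ite_eq_and_mul_apply {ι κ α : Type*} [Fintype ι] [DecidableEq ι]
    [NonAssocSemiring α] (p : ι → Prop) [DecidablePred p] (Q : Matrix ι κ α) (a : ι) (c : κ) :
    ((Matrix.of fun a c : ι => if a = c ∧ p a then (1 : α) else 0) * Q) a c =
      if p a then Q a c else 0 := by
  have hdiag : (Matrix.of fun a c : ι => if a = c ∧ p a then (1 : α) else 0) =
      Matrix.diagonal fun a => if p a then 1 else 0 := by
    ext a c
    by_cases hac : a = c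
    · subst hac; simp
    · simp [hac]
  rw [hdiag, Matrix.diagonal_mul, ite_mul, one_mul, zero_mul]

namespace IsPartiallyCycleConsistent

variable {N : ℕ} {n : Fin N → ℕ} {P : ∀ i j : Fin N, Matrix (Fin (n i)) (Fin (n j)) ℕ}

theorem apply_eq_one_of_apply_eq_one (hP : IsPartiallyCycleConsistent n P) {i j k : Fin N}
    {a : Fin (n i)} {b : Fin (n j)} {c : Fin (n k)} (hik : P i k a c = 1) (hij : P i j a b = 1) :
    P j k b c = 1 :=
  hP.trans j i k b c ⟨a, by rw [hP.symm i j]; exact hij, hik⟩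

theorem exists_path_iff (hP : IsPartiallyCycleConsistent n P) {i j k : Fin N}
    (a : Fin (n i)) (c : Fin (n k)) :
    (∃ b, P i j a b = 1 ∧ P j k b c = 1) ↔ P i k a c = 1 ∧ ∃ b, P i j a b = 1 := by
  constructor
  · rintro ⟨b, hij, hjk⟩
    exact ⟨hP.trans i j k a c ⟨b, hij, hjk⟩, b, hij⟩
  · rintro ⟨hik, b, hij⟩
    exact ⟨b, hij, hP.apply_eq_one_of_apply_eq_one hik hij⟩

theorem mul_apply_eq_ite (hP : IsPartiallyCycleConsistent n P) (i j k : Fin N)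
    (a : Fin (n i)) (c : Fin (n k)) :
    (P i j * P j k) a c = if P i k a c = 1 ∧ ∃ b, P i j a b = 1 then 1 else 0 := by
  rw [(hP.partialPerm i j).mul_apply_eq_ite (hP.partialPerm j k).1]
  exact if_congr (hP.exists_path_iff a c) rfl rfl

end IsPartiallyCycleConsistent

/-- For a partially cycle-consistent family: `(P_ij P_jk)[a,c] = 1` iff
`P_ik[a,c] = 1` and row `a` of `P_ij` contains a 1; equivalently
`P_ij P_jk = I_iji P_ik` where `I_iji` is the diagonal matrix with `I_iji[a,a] = 1`
exactly when row `a` of `P_ij` contains a 1.  Matching from view `i` through view `j`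
to view `k` agrees with the direct matching from `i` to `k` exactly on objects of
view `i` visible in view `j`. -/
theorem through_view_eq_masked_direct {N : ℕ} (n : Fin N → ℕ)
    (P : ∀ i j : Fin N, Matrix (Fin (n i)) (Fin (n j)) ℕ)
    (hP : IsPartiallyCycleConsistent n P) :
    ∀ i j k : Fin N,
      (∀ (a : Fin (n i)) (c : Fin (n k)),
        (P i j * P j k) a c = 1 ↔ (P i k a c = 1 ∧ ∃ b, P i j a b = 1)) ∧
      P i j * P j k =
        (Matrix.of fun a c : Fin (n i) =>
          if a = c ∧ ∃ b, P i j a b = 1 then (1 : ℕ) else 0) * P i k := by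
  intro i j k
  refine ⟨fun a c => ?_, ?_⟩
  · rw [hP.mul_apply_eq_ite]
    split_ifs with h <;> simp [h]
  · ext a c
    rw [hP.mul_apply_eq_ite, Matrix.of_ite_eq_and_mul_apply]
    rcases (hP.partialPerm i k).1 a c with hik | hik <;> simp [hik]
end

section
/- Let {P_ij}_{1≤i,j≤N} be a partially cycle-consistent family of partial matchings between N views of sizes n_1,…,n_N. Then for all i, j, k, I_ijki = I_iji I_iki, i.e., for every index a of view i: there exist b, c with P_ij[a,b] = P_jk[b,c] = P_ki[c,a] = 1 if and only if there exists b with P_ij[a,b] = 1 and there exists c with P_ik[a,c] = 1. In words, the triple cycle through object a exists exactly when a is visible in both view j and view k. -/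
open Matrix

theorem Matrix.of_ite_eq_and_eq_diagonal {ι R : Type*} [DecidableEq ι] [Zero R] [One R]
    (p : ι → ι → Prop) [DecidableRel p] :
    (Matrix.of fun a d : ι => if a = d ∧ p a d then (1 : R) else 0) =
      diagonal fun a => if p a a then 1 else 0 := by
  ext a d
  by_cases had : a = d
  · subst had
    simp
  · simp [had]

namespace IsPartiallyCycleConsistent

variable {N : ℕ} {n : Fin N → ℕ} {P : ∀ i j : Fin N, Matrix (Fin (n i)) (Fin (n j)) ℕ}

theorem apply_swap (hP : IsPartiallyCycleConsistent n P) {i j : Fin N} (a : Fin (n i))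
    (b : Fin (n j)) : P j i b a = P i j a b := by
  rw [hP.symm i j, transpose_apply]

/-- Going back from `j` to `i` and on to `k` closes the cycle `i → j → k → i`. -/
theorem exists_cycle_iff (hP : IsPartiallyCycleConsistent n P) (i j k : Fin N)
    (a : Fin (n i)) :
    (∃ b c, P i j a b = 1 ∧ P j k b c = 1 ∧ P k i c a = 1) ↔
      (∃ b, P i j a b = 1) ∧ (∃ c, P i k a c = 1) := by
  constructor
  · rintro ⟨b, c, hab, hbc, -⟩
    exact ⟨⟨b, hab⟩, c, hP.trans i j k a c ⟨b, hab, hbc⟩⟩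
  · rintro ⟨⟨b, hab⟩, c, hac⟩
    have hba : P j i b a = 1 := by rw [hP.apply_swap]; exact hab
    have hca : P k i c a = 1 := by rw [hP.apply_swap]; exact hac
    exact ⟨b, c, hab, hP.trans j i k b c ⟨a, hba, hac⟩, hca⟩

end IsPartiallyCycleConsistent

open Classical in
/-- For a partially cycle-consistent family, `I_ijki = I_iji * I_iki`: for every index
`a` of view `i`, there exist `b, c` with `P_ij[a,b] = P_jk[b,c] = P_ki[c,a] = 1` iff
there exists `b` with `P_ij[a,b] = 1` and there exists `c` with `P_ik[a,c] = 1`.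
The triple cycle through object `a` exists exactly when `a` is visible in both view
`j` and view `k`. -/
theorem triple_mask_eq_pairwise_masks {N : ℕ} (n : Fin N → ℕ)
    (P : ∀ i j : Fin N, Matrix (Fin (n i)) (Fin (n j)) ℕ)
    (hP : IsPartiallyCycleConsistent n P) :
    ∀ i j k : Fin N,
      ((Matrix.of fun a d : Fin (n i) =>
          if a = d ∧ ∃ b c, P i j a b = 1 ∧ P j k b c = 1 ∧ P k i c d = 1
          then (1 : ℕ) else 0) =
        (Matrix.of fun a c : Fin (n i) =>
          if a = c ∧ ∃ b, P i j a b = 1 then (1 : ℕ) else 0) *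
        (Matrix.of fun a c : Fin (n i) =>
          if a = c ∧ ∃ b, P i k a b = 1 then (1 : ℕ) else 0)) ∧
      (∀ a : Fin (n i),
        (∃ b c, P i j a b = 1 ∧ P j k b c = 1 ∧ P k i c a = 1) ↔
          ((∃ b, P i j a b = 1) ∧ (∃ c, P i k a c = 1))) := by
  intro i j k
  refine ⟨?_, hP.exists_cycle_iff i j k⟩
  simp only [Matrix.of_ite_eq_and_eq_diagonal, diagonal_mul_diagonal, ite_zero_mul_ite_zero,
    mul_one, hP.exists_cycle_iff i j k]
end
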